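/- arXiv:2307.06453 — 3 statements merged into one kernel-verified Lean document; each statement's English description precedes it below -/
import Mathlib

section
/- For any constants ε, C > 0 there is δ > 0 such that the following holds. If (p_n) is a sequence with p_n ≤ C/n, then with high probability G ~ 𝔾(n, p_n) has the property that every vertex subset S with |S| ≤ δn spans at most (1+ε)|S| edges. -/
/-!
Union bound over the sets `S` of size `1 ≤ s ≤ δn` and over the `k = ⌊(1+ε)s⌋ + 1` pairs of `S`
that would all have to be edges: the failure probability is at most `∑ₛ C(n,s) C(s²,k) (C/n)^k`.
With `C(m,j) ≤ (em/j)^j` and `y = eCs/n ≤ 1`, the `s`-th term is at most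
`(en/s)^s y^((1+ε)s) = (K (s/n)^ε)^s`, where `K = e(eC)^(1+ε)`. Once `Kδ^ε ≤ 1/2` these terms are
dominated by `2^(-s)` uniformly in `n`, and each tends to `0` as `n → ∞`, so by Tannery's theorem
their sum tends to `0`.
-/

open MeasureTheory Filter

noncomputable def bernoulliM (p : ℝ) : Measure Bool :=
  (Real.toNNReal p) • Measure.dirac true + (Real.toNNReal (1 - p)) • Measure.dirac false

instance (p : ℝ) : IsFiniteMeasure (bernoulliM p) := by
  unfold bernoulliM; infer_instance

/-- The Erdős–Rényi measure `𝔾(n,p)`: a random symmetric adjacency structure is encoded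
by a matrix of independent Bernoulli(p) entries, of which only the entries strictly
above the diagonal are used (via `GrAdj`). -/
noncomputable def erMeasure (n : ℕ) (p : ℝ) : Measure (Fin n → Fin n → Bool) :=
  Measure.pi fun _ => Measure.pi fun _ => bernoulliM p

def GrAdj {n : ℕ} (A : Fin n → Fin n → Bool) (u v : Fin n) : Prop :=
  u ≠ v ∧ A (min u v) (max u v) = true

noncomputable def edgesWithin {n : ℕ} (A : Fin n → Fin n → Bool) (S : Set (Fin n)) : ℕ :=
  ({e : Fin n × Fin n | e.1 < e.2 ∧ e.1 ∈ S ∧ e.2 ∈ S ∧ GrAdj A e.1 e.2}).ncard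

open Topology Finset
open scoped ENNReal

lemma tendsto_measure_of_tendsto_measure_compl {ι : Type*} {l : Filter ι} {Ω : ι → Type*}
    [∀ i, MeasurableSpace (Ω i)] {μ : ∀ i, Measure (Ω i)} [∀ i, IsProbabilityMeasure (μ i)]
    {s : ∀ i, Set (Ω i)} (hs : ∀ i, MeasurableSet (s i))
    (h : Tendsto (fun i => μ i (s i)ᶜ) l (𝓝 0)) : Tendsto (fun i => μ i (s i)) l (𝓝 1) := by
  have h1 : Tendsto (fun i => 1 - μ i (s i)ᶜ) l (𝓝 1) := by
    simpa using ENNReal.Tendsto.sub tendsto_const_nhds h (.inl ENNReal.one_ne_top)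
  refine h1.congr fun i => ?_
  rw [← prob_compl_eq_one_sub (hs i).compl, compl_compl]

open Nat Real in
lemma Nat.choose_le_exp_mul_div_pow (n k : ℕ) : (n.choose k : ℝ) ≤ (exp 1 * n / k) ^ k := by
  rcases k.eq_zero_or_pos with rfl | hk
  · simp
  have hk' : (0 : ℝ) < k := by exact_mod_cast hk
  calc (n.choose k : ℝ) ≤ n ^ k / k ! := Nat.choose_le_pow_div k n
    _ = (n / k) ^ k * (k ^ k / k !) := by rw [div_pow]; field_simp
    _ ≤ (n / k) ^ k * exp k := by gcongr; exact pow_div_factorial_le_exp _ hk'.le k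
    _ = (exp 1 * n / k) ^ k := by rw [← exp_one_pow, ← mul_pow]; ring_nf

open Real in
lemma choose_mul_choose_mul_pow_le {n s k : ℕ} {C ε : ℝ} (hC : 0 < C) (hε : 0 ≤ ε) (hs : 0 < s)
    (hk : (1 + ε) * s ≤ k) (hsn : exp 1 * C * s ≤ n) :
    n.choose s * (s * s).choose k * (C / n) ^ k ≤
      (exp 1 * (exp 1 * C) ^ (1 + ε) * ((s : ℝ) / n) ^ ε) ^ s := by
  have hs' : (0 : ℝ) < s := by exact_mod_cast hs
  have hn : (0 : ℝ) < n := lt_of_lt_of_le (by positivity) hsn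
  have hsk : (s : ℝ) ≤ k := by nlinarith
  set y := exp 1 * C * s / n with hy
  have hy0 : 0 ≤ y := by positivity
  have hy1 : y ≤ 1 := div_le_one_of_le₀ hsn hn.le
  have hchoose : ((s * s).choose k : ℝ) ≤ (exp 1 * s) ^ k := by
    refine (Nat.choose_le_exp_mul_div_pow _ _).trans (pow_le_pow_left₀ (by positivity) ?_ k)
    rw [div_le_iff₀ (hs'.trans_le hsk)]
    push_cast
    nlinarith [mul_le_mul_of_nonneg_left hsk (by positivity : 0 ≤ exp 1 * s)]
  have hpow : y ^ k ≤ (y ^ (1 + ε)) ^ s := by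
    rw [← rpow_natCast, ← rpow_natCast, ← rpow_mul hy0]
    exact rpow_le_rpow_of_exponent_ge' hy0 hy1 (by positivity) (by linarith)
  calc n.choose s * (s * s).choose k * (C / n) ^ k
      ≤ (exp 1 * n / s) ^ s * (exp 1 * s) ^ k * (C / n) ^ k := by
        gcongr
        exact Nat.choose_le_exp_mul_div_pow n s
    _ = (exp 1 * n / s) ^ s * y ^ k := by
        rw [mul_assoc, ← mul_pow, hy]; ring_nf
    _ ≤ (exp 1 * n / s) ^ s * (y ^ (1 + ε)) ^ s := by gcongr
    _ = (exp 1 * (exp 1 * C) ^ (1 + ε) * ((s : ℝ) / n) ^ ε) ^ s := by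
        have hsplit : ((s : ℝ) / n) ^ (1 + ε) = s / n * ((s : ℝ) / n) ^ ε := by
          rw [rpow_add (by positivity), rpow_one]
        rw [← mul_pow, show y = exp 1 * C * (s / n) by rw [hy]; ring,
          mul_rpow (by positivity) (by positivity), hsplit]
        field_simp

open Real in
lemma tendsto_sum_Icc_floor_pow_rpow {K δ ε : ℝ} (hK : 0 ≤ K) (hδ : 0 ≤ δ) (hε : 0 < ε)
    (hKδ : K * δ ^ ε ≤ 1 / 2) :
    Tendsto (fun n : ℕ => ∑ s ∈ Icc 1 ⌊δ * n⌋₊, (K * ((s : ℝ) / n) ^ ε) ^ s) atTop (𝓝 0) := by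
  conv => enter [1, n]; rw [sum_eq_tsum_indicator]
  rw [← tsum_zero]
  refine tendsto_tsum_of_dominated_convergence summable_geometric_two (fun s => ?_)
    (Eventually.of_forall fun n s => ?_)
  · rcases s.eq_zero_or_pos with rfl | hs
    · simp
    have hterm : Tendsto (fun n : ℕ => (K * ((s : ℝ) / n) ^ ε) ^ s) atTop (𝓝 0) := by
      simpa [zero_rpow hε.ne', hs.ne'] using
        (((tendsto_const_div_atTop_nhds_zero_nat (s : ℝ)).rpow_const (Or.inr hε.le)).const_mul
          K).pow s
    refine squeeze_zero (fun n => ?_) (fun n => ?_) hterm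
    · exact Set.indicator_nonneg (fun s _ => by positivity) s
    · exact Set.indicator_apply_le' (fun _ => le_rfl) (fun _ => by positivity)
  · rw [Real.norm_of_nonneg (Set.indicator_nonneg (fun s _ => by positivity) s)]
    refine Set.indicator_apply_le' (fun hs => ?_) (fun _ => by positivity)
    have hsδ : (s : ℝ) / n ≤ δ := by
      refine div_le_of_le_mul₀ n.cast_nonneg hδ ?_
      have := (mem_Icc.1 (mem_coe.1 hs)).2
      exact (Nat.le_floor_iff (by positivity)).1 this
    refine pow_le_pow_left₀ (by positivity) ?_ s
    exact (mul_le_mul_of_nonneg_left (rpow_le_rpow (by positivity) hsδ hε.le) hK).trans hKδ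

lemma exists_pos_mul_lt_and_mul_rpow_lt (a K : ℝ) {ε c : ℝ} (hε : 0 < ε) (hc : 0 < c) :
    ∃ δ : ℝ, 0 < δ ∧ a * δ < 1 ∧ K * δ ^ ε < c := by
  have hlin : Tendsto (fun δ : ℝ => a * δ) (𝓝 0) (𝓝 0) := by
    simpa using (continuous_const_mul a).tendsto 0
  have hrpow : Tendsto (fun δ : ℝ => K * δ ^ ε) (𝓝 0) (𝓝 0) := by
    simpa [Real.zero_rpow hε.ne'] using
      (Real.continuousAt_rpow_const 0 ε (.inr hε.le)).tendsto.const_mul K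
  obtain ⟨δ, ⟨hlin, hrpow⟩, hδ⟩ := ((((hlin.eventually_lt_const one_pos).and
    (hrpow.eventually_lt_const hc)).filter_mono nhdsWithin_le_nhds).and
      (eventually_mem_nhdsWithin (s := Set.Ioi 0))).exists
  exact ⟨δ, hδ, hlin, hrpow⟩

lemma bernoulliM_singleton_true (p : ℝ) : bernoulliM p {true} = ENNReal.ofReal p := by
  simp [bernoulliM, ENNReal.ofReal]

lemma isProbabilityMeasure_bernoulliM {p : ℝ} (hp : p ∈ Set.Icc (0 : ℝ) 1) :
    IsProbabilityMeasure (bernoulliM p) := by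
  constructor
  simp only [bernoulliM, Measure.coe_add, Measure.coe_smul, Pi.add_apply, Pi.smul_apply,
    measure_univ, ENNReal.smul_def, smul_eq_mul, mul_one]
  rw [← ENNReal.coe_add, ← Real.toNNReal_add hp.1 (by linarith [hp.2])]
  simp

lemma isProbabilityMeasure_erMeasure (n : ℕ) {p : ℝ} (hp : p ∈ Set.Icc (0 : ℝ) 1) :
    IsProbabilityMeasure (erMeasure n p) := by
  have := isProbabilityMeasure_bernoulliM hp
  unfold erMeasure; infer_instance

lemma erMeasure_forall_eq_true {n : ℕ} {p : ℝ} (hp : p ∈ Set.Icc (0 : ℝ) 1)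
    (T : Finset (Fin n × Fin n)) :
    erMeasure n p {A | ∀ e ∈ T, A e.1 e.2 = true} = ENNReal.ofReal p ^ #T := by
  have := isProbabilityMeasure_bernoulliM hp
  have hcyl : {A : Fin n → Fin n → Bool | ∀ e ∈ T, A e.1 e.2 = true} =
      Set.univ.pi fun i => Set.univ.pi fun j =>
        if (i, j) ∈ T then ({true} : Set Bool) else Set.univ := by
    ext A
    simp only [Set.mem_ofPred_eq, Set.mem_pi, Set.mem_univ, true_implies, Prod.forall]
    refine forall₂_congr fun i j => ?_
    split_ifs <;> simp_all
  rw [erMeasure, hcyl, Measure.pi_pi]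
  simp_rw [Measure.pi_pi, apply_ite (bernoulliM p), bernoulliM_singleton_true, measure_univ]
  rw [← prod_product' (f := fun i j => if (i, j) ∈ T then ENNReal.ofReal p else 1),
    prod_ite_mem, univ_product_univ, univ_inter, prod_const]

lemma erMeasure_le_card_filter_le {n : ℕ} {p : ℝ} (hp : p ∈ Set.Icc (0 : ℝ) 1)
    (T : Finset (Fin n × Fin n)) (k : ℕ) :
    erMeasure n p {A | k ≤ #{e ∈ T | A e.1 e.2 = true}} ≤
      (#T).choose k * ENNReal.ofReal p ^ k := by
  have hcover : {A : Fin n → Fin n → Bool | k ≤ #{e ∈ T | A e.1 e.2 = true}} ⊆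
      ⋃ U ∈ T.powersetCard k, {A | ∀ e ∈ U, A e.1 e.2 = true} := by
    intro A hA
    obtain ⟨U, hU, hUcard⟩ := exists_subset_card_eq hA
    refine Set.mem_iUnion₂.2 ⟨U, mem_powersetCard.2 ⟨hU.trans (filter_subset _ _), hUcard⟩, ?_⟩
    exact fun e he => (mem_filter.1 (hU he)).2
  calc erMeasure n p _ ≤ ∑ U ∈ T.powersetCard k, erMeasure n p {A | ∀ e ∈ U, A e.1 e.2 = true} :=
        (measure_mono hcover).trans (measure_biUnion_finset_le _ _)
    _ = (#T).choose k * ENNReal.ofReal p ^ k := by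
        rw [sum_congr rfl fun U hU => by
            rw [erMeasure_forall_eq_true hp, (mem_powersetCard.1 hU).2], sum_const, card_powersetCard, nsmul_eq_mul]

lemma edgesWithin_le_card_filter {n : ℕ} (A : Fin n → Fin n → Bool) (S : Finset (Fin n)) :
    edgesWithin A S ≤ #{e ∈ S ×ˢ S | A e.1 e.2 = true} := by
  rw [edgesWithin, ← Set.ncard_coe_finset]
  refine Set.ncard_le_ncard (fun e ⟨hlt, h1, h2, _, hA⟩ => ?_) (finite_toSet _)
  rw [min_eq_left hlt.le, max_eq_right hlt.le] at hA
  exact mem_coe.2 (mem_filter.2 ⟨mem_product.2 ⟨h1, h2⟩, hA⟩)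

lemma erMeasure_compl_sparse_le {n : ℕ} {p δ ε : ℝ} (hp : p ∈ Set.Icc (0 : ℝ) 1) (hε : 0 ≤ ε) :
    erMeasure n p {A | ∀ S : Set (Fin n), (S.ncard : ℝ) ≤ δ * n →
        (edgesWithin A S : ℝ) ≤ (1 + ε) * S.ncard}ᶜ ≤
      ENNReal.ofReal (∑ s ∈ Icc 1 ⌊δ * n⌋₊,
        n.choose s * (s * s).choose (⌊(1 + ε) * s⌋₊ + 1) * p ^ (⌊(1 + ε) * s⌋₊ + 1)) := by
  classical
  set k : ℕ → ℕ := fun s => ⌊(1 + ε) * s⌋₊ + 1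
  have hcover : {A | ∀ S : Set (Fin n), (S.ncard : ℝ) ≤ δ * n →
      (edgesWithin A S : ℝ) ≤ (1 + ε) * S.ncard}ᶜ ⊆
      ⋃ s ∈ Icc 1 ⌊δ * n⌋₊, ⋃ S ∈ (univ : Finset (Fin n)).powersetCard s,
        {A | k s ≤ #{e ∈ S ×ˢ S | A e.1 e.2 = true}} := by
    intro A hA
    simp only [Set.mem_compl_iff, Set.mem_ofPred_eq, not_forall, not_le] at hA
    obtain ⟨S, hSδ, hdense⟩ := hA
    rw [← Set.coe_toFinset S, Set.ncard_coe_finset] at hSδ hdense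
    have hk : k #S.toFinset ≤ #{e ∈ S.toFinset ×ˢ S.toFinset | A e.1 e.2 = true} := by
      have := (Nat.floor_lt (by positivity)).2 (hdense.trans_le (by
        exact_mod_cast edgesWithin_le_card_filter A S.toFinset))
      simp only [k]
      omega
    have hS : 1 ≤ #S.toFinset := by
      refine Nat.one_le_iff_ne_zero.2 fun h0 => ?_
      simp [card_eq_zero.1 h0, k] at hk
    refine Set.mem_iUnion₂.2 ⟨_, mem_Icc.2 ⟨hS, Nat.le_floor hSδ⟩, Set.mem_iUnion₂.2
      ⟨_, mem_powersetCard.2 ⟨subset_univ _, rfl⟩, hk⟩⟩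
  calc erMeasure n p _
      ≤ ∑ s ∈ Icc 1 ⌊δ * n⌋₊, ∑ S ∈ (univ : Finset (Fin n)).powersetCard s,
          erMeasure n p {A | k s ≤ #{e ∈ S ×ˢ S | A e.1 e.2 = true}} :=
        (measure_mono hcover).trans <| (measure_biUnion_finset_le _ _).trans <|
          sum_le_sum fun s _ => measure_biUnion_finset_le _ _
    _ ≤ ∑ s ∈ Icc 1 ⌊δ * n⌋₊, ∑ S ∈ (univ : Finset (Fin n)).powersetCard s,
          ((s * s).choose (k s) : ℝ≥0∞) * ENNReal.ofReal p ^ k s := by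
        refine sum_le_sum fun s _ => sum_le_sum fun S hS => ?_
        simpa [card_product, (mem_powersetCard.1 hS).2] using
          erMeasure_le_card_filter_le hp (S ×ˢ S) (k s)
    _ = _ := by
        rw [ENNReal.ofReal_sum_of_nonneg fun s _ => by have := hp.1; positivity]
        refine sum_congr rfl fun s _ => ?_
        rw [sum_const, card_powersetCard, card_univ, Fintype.card_fin, nsmul_eq_mul, ← mul_assoc,
          ENNReal.ofReal_mul (by positivity), ENNReal.ofReal_mul (by positivity),
          ENNReal.ofReal_pow hp.1, ENNReal.ofReal_natCast, ENNReal.ofReal_natCast]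

/-- For any `ε, C > 0` there is `δ > 0` such that for any sequence `pₙ ≤ C/n`, whp every
vertex set `S` of `𝔾(n,pₙ)` with `|S| ≤ δ·n` spans at most `(1+ε)·|S|` edges. -/
theorem whp_small_sets_sparse (ε C : ℝ) (hε : 0 < ε) (hC : 0 < C) :
    ∃ δ : ℝ, 0 < δ ∧
      ∀ p : ℕ → ℝ, (∀ n, p n ∈ Set.Icc (0 : ℝ) 1) → (∀ n : ℕ, p n ≤ C / n) →
      Tendsto (fun n => erMeasure n (p n)
          {A | ∀ S : Set (Fin n), (S.ncard : ℝ) ≤ δ * n →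
            ((edgesWithin A S : ℝ)) ≤ (1 + ε) * S.ncard})
        atTop (nhds 1) := by
  obtain ⟨δ, hδ, hδC, hKδ⟩ := exists_pos_mul_lt_and_mul_rpow_lt (Real.exp 1 * C)
    (Real.exp 1 * (Real.exp 1 * C) ^ (1 + ε)) hε one_half_pos
  refine ⟨δ, hδ, fun p hp hpC => ?_⟩
  have hprob := fun n => isProbabilityMeasure_erMeasure n (hp n)
  refine tendsto_measure_of_tendsto_measure_compl (fun _ => .of_discrete) ?_
  have hsum := ENNReal.tendsto_ofReal
    (tendsto_sum_Icc_floor_pow_rpow (by positivity) hδ.le hε hKδ.le)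
  rw [ENNReal.ofReal_zero] at hsum
  refine tendsto_of_tendsto_of_tendsto_of_le_of_le tendsto_const_nhds hsum (fun _ => zero_le)
    fun n => (erMeasure_compl_sparse_le (hp n) hε.le).trans
      (ENNReal.ofReal_le_ofReal (sum_le_sum fun s hs => ?_))
  obtain ⟨hs, hsδ⟩ := mem_Icc.1 hs
  have hsδ : (s : ℝ) ≤ δ * n := (Nat.le_floor_iff (by positivity)).1 hsδ
  calc _ ≤ n.choose s * (s * s).choose (⌊(1 + ε) * s⌋₊ + 1) * (C / n) ^ (⌊(1 + ε) * s⌋₊ + 1) := by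
        gcongr
        exacts [(hp n).1, hpC n]
    _ ≤ _ := choose_mul_choose_mul_pow_le hC hε.le hs
        (by exact_mod_cast (Nat.lt_floor_add_one _).le)
        (by nlinarith [mul_le_mul_of_nonneg_left hsδ (by positivity : 0 ≤ Real.exp 1 * C)])
end

section
/- Let D be a finite digraph with a distinguished vertex subset U, and assign to each v ∈ U a list L(v) ⊆ {1,2,3} of size exactly 2. Suppose that for each of the three possible two-element subsets L of {1,2,3}, there is no directed cycle of D all of whose vertices lie in {v ∈ U : L(v) = L}. Then for any colouring c : V(D) \ U → {1,2,3} of the vertices without lists, the colouring can be completed by assigning a colour c(v) ∈ L(v) to each v ∈ U in such a way that every v ∈ U is majority-coloured with respect to the completed colouring (no guarantee is made about vertices outside U). -/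
/-- There is no directed cycle of the digraph `Adj` all of whose vertices lie in `T`:
there is no injective cyclic sequence of vertices of `T`, each of which has an arc to
the next (cyclically). -/
def NoDirectedCycleIn {V : Type*} (Adj : V → V → Prop) (T : Set V) : Prop :=
  ¬ ∃ (m : ℕ) (f : Fin (m + 1) → V), Function.Injective f ∧ (∀ i, f i ∈ T) ∧
      ∀ i : Fin (m + 1), Adj (f i) (f (i + 1))

/-- A vertex `v` is majority-coloured w.r.t. `c`: at most half of its out-neighbours
share its colour. -/
def MajorityAt {V : Type*} (Adj : V → V → Prop) (c : V → Fin 3) (v : V) : Prop :=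
  2 * ({w | Adj v w ∧ c w = c v} : Set V).ncard ≤ ({w | Adj v w} : Set V).ncard

/-!
Colour the vertices of `U` one at a time. Since the vertices of `U` with a given list span
no directed cycle, some `v ∈ U` has no out-neighbour in `U` carrying the same list `{a, b}`.
An out-neighbour `w` of `v` could then end up with colour `a` or with colour `b`, but not
with both: outside `U` its colour is fixed, and inside `U` its list is a different
two-element set. So one of `a`, `b` is available to at most half of the out-neighbours of
`v`; give `v` that colour, fix it, and colour `U \ {v}` by induction.
-/

open Function Set

theorem NoDirectedCycleIn.mono {V : Type*} {Adj : V → V → Prop} {T T' : Set V}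
    (h : NoDirectedCycleIn Adj T) (hsub : T' ⊆ T) : NoDirectedCycleIn Adj T' :=
  fun ⟨m, f, hinj, hmem, hadj⟩ => h ⟨m, f, hinj, fun i => hsub (hmem i), hadj⟩

theorem Function.exists_mem_periodicPts {α : Type*} [Finite α] [Nonempty α] (f : α → α) :
    ∃ x, x ∈ periodicPts f := by
  obtain ⟨i, j, hne, hij⟩ :=
    Finite.exists_ne_map_eq_of_infinite fun n => f^[n] (Classical.arbitrary α)
  wlog hlt : i < j generalizing i j
  · exact this j i hne.symm hij.symm (hne.lt_or_gt.resolve_left hlt)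
  refine ⟨f^[i] (Classical.arbitrary α), mk_mem_periodicPts (Nat.sub_pos_of_lt hlt) ?_⟩
  rw [IsPeriodicPt, IsFixedPt, ← iterate_add_apply, Nat.sub_add_cancel hlt.le]
  exact hij.symm

theorem not_noDirectedCycleIn_of_mem_periodicPts {V : Type*} {Adj : V → V → Prop} {T : Set V}
    (F : T → T) (hF : ∀ v : T, Adj v (F v)) {y : T} (hy : y ∈ periodicPts F) :
    ¬ NoDirectedCycleIn Adj T := by
  obtain ⟨m, hm⟩ : ∃ m, minimalPeriod F y = m + 1 :=
    Nat.exists_eq_add_one_of_ne_zero (minimalPeriod_pos_of_mem_periodicPts hy).ne'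
  refine not_not.2 ⟨m, fun i => (F^[i] y : V), fun i j hij => ?_, fun i => (F^[i] y).2,
    fun i => ?_⟩
  · exact Fin.ext <| iterate_injOn_Iio_minimalPeriod (by simp [hm, i.is_lt])
      (by simp [hm, j.is_lt]) (Subtype.ext hij)
  · have hsucc : ((i + 1 : Fin (m + 1)) : ℕ) = (i + 1) % minimalPeriod F y := by
      rw [hm, Fin.val_add, Fin.val_one', Nat.add_mod_mod]
    simp only [hsucc, iterate_mod_minimalPeriod_eq, iterate_succ_apply']
    exact hF _

theorem NoDirectedCycleIn.exists_forall_not_adj {V : Type*} [Finite V] {Adj : V → V → Prop}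
    {T : Set V} (h : NoDirectedCycleIn Adj T) (hT : T.Nonempty) :
    ∃ v ∈ T, ∀ w ∈ T, ¬ Adj v w := by
  by_contra! hsucc
  choose F hFT hF using hsucc
  have : Nonempty T := hT.to_subtype
  obtain ⟨y, hy⟩ := exists_mem_periodicPts fun v : T => (⟨F v v.2, hFT v v.2⟩ : T)
  exact not_noDirectedCycleIn_of_mem_periodicPts _ (fun v => hF v v.2) hy h

section ListColouring

variable {V : Type*} (Adj : V → V → Prop) (U : Set V) (L : V → Finset (Fin 3))

def IsMajorityCompletion (c c' : V → Fin 3) : Prop :=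
  (∀ v ∉ U, c' v = c v) ∧ (∀ v ∈ U, c' v ∈ L v) ∧ ∀ v ∈ U, MajorityAt Adj c' v

/-- The out-neighbours of `v` that can receive colour `x` in a completion of `c`. -/
def outNbrsAdmitting (c : V → Fin 3) (v : V) (x : Fin 3) : Set V :=
  {w | Adj v w ∧ (w ∉ U ∧ c w = x ∨ w ∈ U ∧ x ∈ L w)}

variable {Adj U L}

theorem disjoint_outNbrsAdmitting (hL : ∀ v ∈ U, (L v).card = 2) (c : V → Fin 3) {v : V}
    (hsink : ∀ w ∈ U, L w = L v → ¬ Adj v w) {a b : Fin 3} (hab : a ≠ b)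
    (hLv : L v = {a, b}) :
    Disjoint (outNbrsAdmitting Adj U L c v a) (outNbrsAdmitting Adj U L c v b) := by
  rw [Set.disjoint_left]
  rintro w ⟨hvw, ⟨hwU, rfl⟩ | ⟨hwU, ha⟩⟩ ⟨-, ⟨hwU', hb⟩ | ⟨hwU', hb⟩⟩
  · exact hab hb
  · exact hwU hwU'
  · exact hwU' hwU
  · have hLw : L v ⊆ L w := hLv ▸ Finset.insert_subset ha (Finset.singleton_subset_iff.2 hb)
    refine hsink w hwU (Finset.eq_of_subset_of_card_le hLw ?_).symm hvw
    rw [hL w hwU, hLv, Finset.card_pair hab]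

theorem exists_mem_two_mul_ncard_outNbrsAdmitting_le [Finite V]
    (hL : ∀ v ∈ U, (L v).card = 2) (c : V → Fin 3) {v : V} (hv : v ∈ U)
    (hsink : ∀ w ∈ U, L w = L v → ¬ Adj v w) :
    ∃ x ∈ L v, 2 * (outNbrsAdmitting Adj U L c v x).ncard ≤ {w | Adj v w}.ncard := by
  obtain ⟨a, b, hab, hLv⟩ := Finset.card_eq_two.1 (hL v hv)
  have hsum : (outNbrsAdmitting Adj U L c v a).ncard + (outNbrsAdmitting Adj U L c v b).ncard
      ≤ {w | Adj v w}.ncard := by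
    rw [← ncard_union_eq (disjoint_outNbrsAdmitting hL c hsink hab hLv)]
    exact ncard_le_ncard (union_subset (fun w hw => hw.1) fun w hw => hw.1)
  rcases le_total (outNbrsAdmitting Adj U L c v a).ncard
    (outNbrsAdmitting Adj U L c v b).ncard with hle | hle
  · exact ⟨a, by simp [hLv], by omega⟩
  · exact ⟨b, by simp [hLv], by omega⟩

theorem IsMajorityCompletion.of_diff_singleton [Finite V] [DecidableEq V] {c c' : V → Fin 3}
    {v : V} {x : Fin 3} (hv : v ∈ U) (hsink : ∀ w ∈ U, L w = L v → ¬ Adj v w) (hx : x ∈ L v)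
    (hxmaj : 2 * (outNbrsAdmitting Adj U L c v x).ncard ≤ {w | Adj v w}.ncard)
    (h : IsMajorityCompletion Adj (U \ {v}) L (update c v x) c') :
    IsMajorityCompletion Adj U L c c' := by
  obtain ⟨hout, hmem, hmaj⟩ := h
  have hc'v : c' v = x := by simpa using hout v (by simp)
  have hc'out : ∀ w ∉ U, c' w = c w := fun w hw => by
    rw [hout w fun h => hw h.1, update_of_ne (ne_of_mem_of_not_mem hv hw).symm]
  refine ⟨hc'out, fun w hw => ?_, fun w hw => ?_⟩
  · rcases eq_or_ne w v with rfl | hwv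
    · exact hc'v ▸ hx
    · exact hmem w ⟨hw, hwv⟩
  rcases eq_or_ne w v with rfl | hwv
  · have hsame : {u | Adj w u ∧ c' u = c' w} ⊆ outNbrsAdmitting Adj U L c w x := by
      rintro u ⟨hwu, hu⟩
      rw [hc'v] at hu
      refine ⟨hwu, ?_⟩
      by_cases huU : u ∈ U
      · have huw : u ≠ w := by rintro rfl; exact hsink u huU rfl hwu
        exact Or.inr ⟨huU, hu ▸ hmem u ⟨huU, huw⟩⟩
      · exact Or.inl ⟨huU, hc'out u huU ▸ hu⟩
    exact (Nat.mul_le_mul_left 2 (ncard_le_ncard hsame)).trans hxmaj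
  · exact hmaj w ⟨hw, hwv⟩

theorem exists_isMajorityCompletion [Finite V] (hL : ∀ v ∈ U, (L v).card = 2)
    (hcyc : ∀ l : Finset (Fin 3), NoDirectedCycleIn Adj {v | v ∈ U ∧ L v = l})
    (c : V → Fin 3) : ∃ c', IsMajorityCompletion Adj U L c c' := by
  classical
  obtain ⟨n, hn⟩ : ∃ n, U.ncard = n := ⟨_, rfl⟩
  induction n generalizing U c with
  | zero =>
    rw [ncard_eq_zero] at hn
    subst hn
    exact ⟨c, fun _ _ => rfl, by simp, by simp⟩
  | succ n ih =>
    obtain ⟨v₀, hv₀⟩ := nonempty_of_ncard_ne_zero (s := U) (by omega)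
    obtain ⟨v, ⟨hv, hLv⟩, hv'⟩ :=
      (hcyc (L v₀)).exists_forall_not_adj ⟨v₀, hv₀, rfl⟩
    have hsink : ∀ w ∈ U, L w = L v → ¬ Adj v w :=
      fun w hw hLw => hv' w ⟨hw, hLw.trans hLv⟩
    obtain ⟨x, hx, hxmaj⟩ := exists_mem_two_mul_ncard_outNbrsAdmitting_le hL c hv hsink
    obtain ⟨c', hc'⟩ := ih (U := U \ {v}) (fun w hw => hL w hw.1)
      (fun l => (hcyc l).mono fun w hw => ⟨hw.1.1, hw.2⟩) (update c v x)
      (by rw [ncard_sdiff_singleton_of_mem hv, hn]; rfl)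
    exact ⟨c', hc'.of_diff_singleton hv hsink hx hxmaj⟩

end ListColouring

theorem majority_list_colouring_of_acyclic_lists_general
    {V : Type*} [Fintype V] (Adj : V → V → Prop)
    (U : Set V) (L : V → Finset (Fin 3)) (hL : ∀ v ∈ U, (L v).card = 2)
    (hcyc : ∀ l : Finset (Fin 3), NoDirectedCycleIn Adj {v | v ∈ U ∧ L v = l})
    (c : V → Fin 3) :
    ∃ c' : V → Fin 3, (∀ v ∉ U, c' v = c v) ∧ (∀ v ∈ U, c' v ∈ L v) ∧
      ∀ v ∈ U, MajorityAt Adj c' v :=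
  exists_isMajorityCompletion hL hcyc c

/-- Let `D` be a finite digraph with a distinguished vertex set `U`, assign to each
`v ∈ U` a list `L v ⊆ {1,2,3}` of size 2, and suppose that for each possible list there
is no directed cycle among the vertices of `U` with that list. Then any colouring of the
vertices outside `U` can be completed, choosing colours from the lists on `U`, so that
every vertex of `U` is majority-coloured. -/
theorem majority_list_colouring_of_acyclic_lists
    {V : Type*} [Fintype V] (Adj : V → V → Prop) (hirr : ∀ v, ¬ Adj v v)
    (U : Set V) (L : V → Finset (Fin 3)) (hL : ∀ v ∈ U, (L v).card = 2)
    (hcyc : ∀ l : Finset (Fin 3), NoDirectedCycleIn Adj {v | v ∈ U ∧ L v = l})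
    (c : V → Fin 3) :
    ∃ c' : V → Fin 3, (∀ v ∉ U, c' v = c v) ∧ (∀ v ∈ U, c' v ∈ L v) ∧
      ∀ v ∈ U, MajorityAt Adj c' v :=
  majority_list_colouring_of_acyclic_lists_general Adj U L hL hcyc c
end

section
/- Define f : (0,1) → ℝ by f(α) = α·(log(arctan(√(α/(1−α)))) − log α) + (1−α)·(log(arctan(√((1−α)/α))) − log(1−α)) + log(2/π). Then f(α) ≤ 0 for all α ∈ (0,1), and f(α) = 0 if and only if α = 1/2. -/
/-!
Put `x = arctan √(α / (1 - α))`, so that `α = sin² x` and `arctan √((1 - α) / α) = π/2 - x`.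
Then `overlapRate α = α log p + (1 - α) log q - log (π/2)` with `p = x / α`,
`q = (π/2 - x) / (1 - α)` and `α p + (1 - α) q = π/2`, so strict concavity of `log` gives
`overlapRate α ≤ 0`, with equality iff `p = q`. The latter means `sin² x = 2x/π`, i.e. the chord
`1 - 2y/π` of `cos` over `[0, π]` meets `cos` at `y = 2x`; by Jordan's inequality this happens
only at `y = π/2`, that is `α = 1/2`.
-/

open Real

/-- The exponential-rate function appearing in the second-moment computation. -/
noncomputable def overlapRate (α : ℝ) : ℝ :=
  α * (Real.log (Real.arctan (Real.sqrt (α / (1 - α)))) - Real.log α) +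
    (1 - α) * (Real.log (Real.arctan (Real.sqrt ((1 - α) / α))) - Real.log (1 - α)) +
    Real.log (2 / Real.pi)

lemma sin_sq_arctan_sqrt_div_one_sub {α : ℝ} (h0 : 0 ≤ α) (h1 : α < 1) :
    sin (arctan √(α / (1 - α))) ^ 2 = α := by
  have hb : 0 < 1 - α := by linarith
  rw [sin_sq_arctan, sq_sqrt (by positivity)]
  field_simp
  ring

lemma arctan_sqrt_div_add_arctan_sqrt_div {a b : ℝ} (ha : 0 < a) (hb : 0 < b) :
    arctan √(a / b) + arctan √(b / a) = π / 2 := by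
  rw [← inv_div, sqrt_inv, arctan_inv_of_pos (sqrt_pos.2 (by positivity))]
  ring

lemma eq_pi_div_two_of_cos_eq_one_sub {y : ℝ} (h0 : 0 < y) (hπ : y < π)
    (h : cos y = 1 - 2 * y / π) : y = π / 2 := by
  have hπ0 : 0 < π := pi_pos
  -- Jordan's inequality `2x/π < sin x`, at `x = π/2 - y` or at `x = y - π/2`.
  rcases lt_trichotomy y (π / 2) with hy | hy | hy
  · have := mul_lt_sin (x := π / 2 - y) (by linarith) (by linarith)
    rw [sin_pi_div_two_sub, h] at this
    field_simp at this
    linarith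
  · exact hy
  · have := mul_lt_sin (x := y - π / 2) (by linarith) (by linarith)
    rw [sin_sub_pi_div_two, h] at this
    field_simp at this
    linarith

lemma eq_pi_div_four_of_sin_sq_eq {x : ℝ} (h0 : 0 < x) (hπ : x < π / 2)
    (h : sin x ^ 2 = 2 * x / π) : x = π / 4 := by
  have hcos : cos (2 * x) = 1 - 2 * (2 * x) / π := by
    rw [cos_two_mul, cos_sq', h]
    ring
  linarith [eq_pi_div_two_of_cos_eq_one_sub (by linarith) (by linarith) hcos]

lemma mul_log_add_mul_log_lt_log {a p q : ℝ} (ha0 : 0 < a) (ha1 : a < 1) (hp : 0 < p)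
    (hq : 0 < q) (hpq : p ≠ q) :
    a * log p + (1 - a) * log q < log (a * p + (1 - a) * q) :=
  strictConcaveOn_log_Ioi.2 hp hq hpq ha0 (by linarith) (by ring)

lemma overlapRate_one_half : overlapRate (1 / 2) = 0 := by
  have h : log (π / 4) - log (1 / 2) + log (2 / π) = 0 := by
    rw [← log_div (by positivity) (by norm_num), ← log_mul (by positivity) (by positivity)]
    field_simp
    norm_num
  norm_num [overlapRate, arctan_one]
  linarith

lemma overlapRate_neg {α : ℝ} (h0 : 0 < α) (h1 : α < 1) (hne : α ≠ 1 / 2) :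
    overlapRate α < 0 := by
  set x := arctan √(α / (1 - α)) with hx
  have hb : 0 < 1 - α := by linarith
  have hx0 : 0 < x := arctan_pos.2 (sqrt_pos.2 (by positivity))
  have hxπ : x < π / 2 := arctan_lt_pi_div_two _
  have hsin : sin x ^ 2 = α := sin_sq_arctan_sqrt_div_one_sub h0.le h1
  have hy : arctan √((1 - α) / α) = π / 2 - x := by
    linarith [arctan_sqrt_div_add_arctan_sqrt_div h0 hb]
  set p := x / α
  set q := (π / 2 - x) / (1 - α)
  have hrate : overlapRate α = α * log p + (1 - α) * log q - log (π / 2) := by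
    rw [overlapRate, hy, ← hx, log_div hx0.ne' h0.ne', log_div (by linarith) hb.ne',
      ← inv_div π 2, log_inv]
    ring
  have hmean : α * p + (1 - α) * q = π / 2 := by
    simp only [p, q]
    field_simp
    ring
  have hpq : p ≠ q := by
    intro hpq
    have hx_eq : x = π / 4 := by
      refine eq_pi_div_four_of_sin_sq_eq hx0 hxπ ?_
      rw [div_eq_div_iff h0.ne' hb.ne'] at hpq
      rw [hsin, eq_div_iff pi_pos.ne']
      linarith
    apply hne
    rw [← hsin, hx_eq, sin_pi_div_four, div_pow, sq_sqrt zero_le_two]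
    norm_num
  have hjensen := mul_log_add_mul_log_lt_log h0 h1 (by positivity) (by positivity) hpq
  rw [hmean] at hjensen
  linarith

/-- `overlapRate α ≤ 0` for all `α ∈ (0,1)`, with equality iff `α = 1/2`. -/
theorem overlapRate_nonpos (α : ℝ) (hα : α ∈ Set.Ioo (0 : ℝ) 1) :
    overlapRate α ≤ 0 ∧ (overlapRate α = 0 ↔ α = 1 / 2) := by
  rcases eq_or_ne α (1 / 2) with rfl | hne
  · exact ⟨overlapRate_one_half.le, iff_of_true overlapRate_one_half rfl⟩
  · have hneg := overlapRate_neg hα.1 hα.2 hne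
    exact ⟨hneg.le, iff_of_false hneg.ne hne⟩
end
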